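/- Let W be a finite Coxeter group on V = ℂ^n with positive roots R_+ ((γ,γ)=2), Dunkl operators ∇_i with parameter c = ν, and C*^k_{ij}(x) = Σ_{γ∈R_+} γ_i γ_j γ_k/(γ,x). If p is a W-invariant polynomial satisfying ∂²p/∂x^i∂x^j = ν C*^k_{ij} ∂p/∂x^k for all i,j (as rational functions, i.e. after clearing denominators as polynomial identities), then for every j the polynomial v_j = ∂_{x^j} p satisfies ∇_i v_j = 0 for all i. -/

import Mathlib

/-!
Differentiating `s_γ p = p` with the chain rule gives
`∂_j p - s_γ(∂_j p) = -γ_j Σ_k γ_k s_γ(∂_k p)`; pairing this with `γ` and using `(γ, γ) = 2`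
shows `Σ_k γ_k ∂_k p = -Σ_k γ_k s_γ(∂_k p)`, so `∂_j p - s_γ(∂_j p) = γ_j (γ, ∂) p`.
Substituting this into the difference part of each Dunkl operator turns `∇_i v_j = 0`
into the assumed system `∂_i ∂_j p = ν C*^k_{ij} ∂_k p`.
-/

open MvPolynomial

/-- The linear form L_γ = (γ, x) = Σ_k γ_k x^k as a polynomial. -/
noncomputable def Lform (n : ℕ) (γ : Fin n → ℂ) : MvPolynomial (Fin n) ℂ :=
  ∑ k, C (γ k) * X k

/-- The reflection s_γ acting on polynomials: x^i ↦ x^i − γ_i (γ, x). -/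
noncomputable def reflPoly (n : ℕ) (γ : Fin n → ℂ) :
    MvPolynomial (Fin n) ℂ →ₐ[ℂ] MvPolynomial (Fin n) ℂ :=
  aeval fun i => X i - C (γ i) * ∑ k, C (γ k) * X k

theorem MvPolynomial.pderiv_aeval {R σ τ : Type*} [CommSemiring R] [Fintype σ]
    (f : σ → MvPolynomial τ R) (j : τ) (q : MvPolynomial σ R) :
    pderiv j (aeval f q) = ∑ k, aeval f (pderiv k q) * pderiv j (f k) := by
  classical
  induction q using MvPolynomial.induction_on with
  | C a => simp
  | add q r hq hr => simp only [map_add, hq, hr, add_mul, Finset.sum_add_distrib]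
  | mul_X q i hq =>
    simp only [map_mul, aeval_X, pderiv_mul, hq, map_add, pderiv_X, Pi.single_apply, add_mul,
      Finset.sum_add_distrib, mul_ite, mul_one, mul_zero, apply_ite (aeval f), map_zero, ite_mul,
      zero_mul, Finset.sum_ite_eq, Finset.mem_univ, if_true, Finset.sum_mul]
    exact congrArg₂ _ (Finset.sum_congr rfl fun k _ => mul_right_comm _ _ _) rfl

theorem pderiv_Lform (n : ℕ) (γ : Fin n → ℂ) (j : Fin n) : pderiv j (Lform n γ) = C (γ j) := by
  classical
  simp [Lform, pderiv_X, Pi.single_apply]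

theorem reflPoly_eq_aeval (n : ℕ) (γ : Fin n → ℂ) :
    reflPoly n γ = aeval fun i => X i - C (γ i) * Lform n γ := rfl

theorem pderiv_reflPoly (n : ℕ) (γ : Fin n → ℂ) (j : Fin n) (q : MvPolynomial (Fin n) ℂ) :
    pderiv j (reflPoly n γ q)
      = reflPoly n γ (pderiv j q) - C (γ j) * ∑ k, C (γ k) * reflPoly n γ (pderiv k q) := by
  classical
  conv_lhs => rw [reflPoly_eq_aeval, pderiv_aeval, ← reflPoly_eq_aeval]
  simp only [map_sub, pderiv_X, pderiv_mul, pderiv_C, pderiv_Lform, zero_mul, zero_add,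
    Pi.single_apply, mul_sub, mul_ite, mul_one, mul_zero, Finset.sum_sub_distrib,
    Finset.sum_ite_eq', Finset.mem_univ, if_true, Finset.mul_sum]
  exact congrArg₂ _ rfl (Finset.sum_congr rfl fun k _ => by ring)

theorem pderiv_sub_reflPoly_pderiv_of_invariant (n : ℕ) {γ : Fin n → ℂ}
    (hγ : ∑ k, γ k * γ k = 2) {p : MvPolynomial (Fin n) ℂ} (hp : reflPoly n γ p = p) (j : Fin n) :
    pderiv j p - reflPoly n γ (pderiv j p) = C (γ j) * ∑ k, C (γ k) * pderiv k p := by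
  set D := ∑ k, C (γ k) * reflPoly n γ (pderiv k p)
  have hdiff : ∀ m, pderiv m p - reflPoly n γ (pderiv m p) = -(C (γ m) * D) := by
    intro m
    have h := pderiv_reflPoly n γ m p
    rw [hp] at h
    linear_combination h
  have hsum : ∑ k, C (γ k) * pderiv k p = -D := by
    calc ∑ k, C (γ k) * pderiv k p
        = ∑ k, (C (γ k) * reflPoly n γ (pderiv k p) - C (γ k * γ k) * D) :=
          Finset.sum_congr rfl fun k _ => by rw [C_mul]; linear_combination C (γ k) * hdiff k
      _ = D - C (∑ k, γ k * γ k) * D := by rw [Finset.sum_sub_distrib, map_sum, Finset.sum_mul]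
      _ = -D := by rw [hγ, map_ofNat]; ring
  rw [hdiff, hsum, mul_neg]

/-- Proposition 2.4: if a W-invariant polynomial p satisfies
∂²p/∂x^i∂x^j = ν C*^k_{ij} ∂p/∂x^k (denominators cleared), then each v_j = ∂_{x^j}p is
singular: ∇_i v_j = 0 (denominators cleared) for the Dunkl operators with c = ν. -/
theorem stmt13 (n : ℕ) (ν : ℂ) (R : Finset (Fin n → ℂ))
    (hnorm : ∀ γ ∈ R, ∑ k, γ k * γ k = 2)
    (p : MvPolynomial (Fin n) ℂ)
    (hinv : ∀ γ ∈ R, reflPoly n γ p = p)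
    (hsys : ∀ i j : Fin n,
      (∏ γ ∈ R, Lform n γ) * pderiv i (pderiv j p)
        = C ν * ∑ γ ∈ R, C (γ i * γ j) * (∑ k, C (γ k) * pderiv k p) *
            ∏ γ' ∈ R.erase γ, Lform n γ') :
    ∀ i j : Fin n,
      (∏ γ ∈ R, Lform n γ) * pderiv i (pderiv j p)
        = C ν * ∑ γ ∈ R, C (γ i) * (pderiv j p - reflPoly n γ (pderiv j p)) *
            ∏ γ' ∈ R.erase γ, Lform n γ' := by
  intro i j
  rw [hsys i j]
  refine congrArg _ (Finset.sum_congr rfl fun γ hγ => ?_)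
  rw [pderiv_sub_reflPoly_pderiv_of_invariant n (hnorm γ hγ) (hinv γ hγ), C_mul]
  ring
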